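/- A bicomplex matrix A ∈ 𝔹ℂ^{n×n} is hyperbolic positive if and only if there exists an upper triangular bicomplex matrix U ∈ 𝔹ℂ^{n×n} (i.e. both idempotent components of U are upper triangular complex matrices) such that A = (U*)ᵗ·U. -/

import Mathlib

open Complex Matrix Kronecker BigOperators

open scoped ComplexOrder

/-- Bicomplex numbers, modeled as pairs `(z₁, z₂) ∈ ℂ × ℂ` representing `z₁ + j z₂`.
Addition is the componentwise (Prod) addition. -/
abbrev BC : Type := ℂ × ℂ

noncomputable section

/-- Bicomplex multiplication: `(z₁,z₂)·(w₁,w₂) = (z₁w₁ − z₂w₂, z₁w₂ + z₂w₁)`. -/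
def bcMul (z w : BC) : BC := (z.1 * w.1 - z.2 * w.2, z.1 * w.2 + z.2 * w.1)

/-- The `*`-conjugate `Z* = conj z₁ − j conj z₂`. -/
def bcStar (z : BC) : BC := ((starRingEnd ℂ) z.1, -((starRingEnd ℂ) z.2))

/-- First idempotent component `λ₁ = z₁ − i z₂`. -/
def idem1 (z : BC) : ℂ := z.1 - Complex.I * z.2

/-- Second idempotent component `λ₂ = z₁ + i z₂`. -/
def idem2 (z : BC) : ℂ := z.1 + Complex.I * z.2

/-- Membership in `𝔻⁺`: both idempotent components are nonnegative real numbers. -/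
def inDplus (z : BC) : Prop :=
  (idem1 z).im = 0 ∧ 0 ≤ (idem1 z).re ∧ (idem2 z).im = 0 ∧ 0 ≤ (idem2 z).re

/-- A bicomplex matrix `A = A₁ + j A₂` is a pair of complex matrices. -/
abbrev BCMat (I J : Type) : Type := Matrix I J ℂ × Matrix I J ℂ

/-- Bicomplex matrix multiplication, induced by bicomplex multiplication. -/
def bmul {I J K : Type} [Fintype J] (A : BCMat I J) (B : BCMat J K) : BCMat I K :=
  (A.1 * B.1 - A.2 * B.2, A.1 * B.2 + A.2 * B.1)

/-- `(A*)ᵗ`: the entrywise `*`-conjugate followed by transpose. -/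
def bcStarT {I J : Type} (A : BCMat I J) : BCMat J I := (A.1ᴴ, -(A.2ᴴ))

/-- The `(j,k)` entry of a bicomplex matrix, as a bicomplex number. -/
def bcEntry {I J : Type} (A : BCMat I J) (j : I) (k : J) : BC := (A.1 j k, A.2 j k)

/-- First idempotent component `𝒜₁ = A₁ − i A₂` of a bicomplex matrix. -/
def midem1 {I J : Type} (A : BCMat I J) : Matrix I J ℂ := A.1 - Complex.I • A.2

/-- Second idempotent component `𝒜₂ = A₁ + i A₂` of a bicomplex matrix. -/
def midem2 {I J : Type} (A : BCMat I J) : Matrix I J ℂ := A.1 + Complex.I • A.2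

/-- The bicomplex number `(c*)ᵗ · A · c`. -/
def quadForm {I : Type} [Fintype I] (A : BCMat I I) (c : I → BC) : BC :=
  ∑ j, ∑ k, bcMul (bcStar (c j)) (bcMul (bcEntry A j k) (c k))

/-- `A` is hyperbolic positive if `(c*)ᵗ · A · c ∈ 𝔻⁺` for every bicomplex vector `c`. -/
def HypPos {I : Type} [Fintype I] (A : BCMat I I) : Prop :=
  ∀ c : I → BC, inDplus (quadForm A c)

/-- Bicomplex trace `Tr(A) = Tr(A₁) + j Tr(A₂)`. -/
def bcTrace {I : Type} [Fintype I] (A : BCMat I I) : BC := (A.1.trace, A.2.trace)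

/-- The bicomplex tensor product
`A ⊗ⱼ B = (A₁⊗B₁ − A₂⊗B₂) + j (A₁⊗B₂ + A₂⊗B₁)`. -/
def bkron {I J K L : Type} (A : BCMat I J) (B : BCMat K L) : BCMat (I × K) (J × L) :=
  (A.1 ⊗ₖ B.1 - A.2 ⊗ₖ B.2, A.1 ⊗ₖ B.2 + A.2 ⊗ₖ B.1)

end

/-!
Via the idempotent components, a bicomplex number is a pair of complex numbers with
componentwise ring operations, and the `*`-conjugate becomes complex conjugation in each
component. Hence `(c*)ᵗ · A · c` has idempotent components `x₁ᴴ 𝒜₁ x₁` and `x₂ᴴ 𝒜₂ x₂`, where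
`x₁, x₂` are the (independent, arbitrary) idempotent components of `c`. So `A` is hyperbolic
positive iff `𝒜₁` and `𝒜₂` are positive semidefinite, and the theorem reduces to the complex
Cholesky factorisation `M = Tᴴ T` of a positive semidefinite matrix, applied to each component;
the latter comes from Gram–Schmidt applied to the columns of any `B` with `M = Bᴴ B`.
-/

open scoped InnerProductSpace

theorem Matrix.posSemidef_iff_forall_star_dotProduct_mulVec_nonneg {ι : Type*} [Fintype ι]
    {M : Matrix ι ι ℂ} : M.PosSemidef ↔ ∀ x, 0 ≤ star x ⬝ᵥ (M *ᵥ x) := by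
  classical
  refine ⟨PosSemidef.dotProduct_mulVec_nonneg, fun hM => ?_⟩
  have inner_eq (v : EuclideanSpace ℂ ι) :
      ⟪M.toEuclideanLin v, v⟫_ℂ = star (star v.ofLp ⬝ᵥ (M *ᵥ v.ofLp)) := by
    rw [← inner_conj_symm, EuclideanSpace.inner_eq_star_dotProduct]
    simp [dotProduct_comm]
  rw [← isPositive_toEuclideanLin_iff, LinearMap.isPositive_iff,
    LinearMap.isSymmetric_iff_inner_map_self_real]
  refine ⟨fun v => ?_, fun v => ?_⟩
  · rw [inner_eq, starRingEnd_apply, star_star, (IsSelfAdjoint.of_nonneg (hM v.ofLp)).star_eq]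
  · rw [inner_eq, star_nonneg_iff]
    exact hM v.ofLp

theorem Matrix.PosSemidef.exists_isUpperTriangular_eq_conjTranspose_mul
    {𝕜 ι : Type*} [RCLike 𝕜] [Fintype ι] [LinearOrder ι] [LocallyFiniteOrderBot ι]
    {M : Matrix ι ι 𝕜} (hM : M.PosSemidef) :
    ∃ T : Matrix ι ι 𝕜, T.IsUpperTriangular ∧ M = Tᴴ * T := by
  obtain ⟨B, rfl⟩ : ∃ B : Matrix ι ι 𝕜, M = Bᴴ * B := by
    open scoped MatrixOrder in exact CStarAlgebra.nonneg_iff_eq_star_mul_self.mp hM.nonneg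
  let v : ι → EuclideanSpace 𝕜 ι := fun j => WithLp.toLp 2 (Bᵀ j)
  have hgram : Bᴴ * B = gram 𝕜 v := by
    ext i j
    simp [v, gram_apply, mul_apply, EuclideanSpace.inner_eq_star_dotProduct, dotProduct, mul_comm]
  let Q := InnerProductSpace.gramSchmidtOrthonormalBasis finrank_euclideanSpace v
  exact ⟨_, fun i j hji => InnerProductSpace.gramSchmidtOrthonormalBasis_inv_triangular' _ v hji,
    hgram.trans (gram_eq_conjTranspose_mul Q v)⟩

noncomputable section

lemma idem1_bcMul (z w : BC) : idem1 (bcMul z w) = idem1 z * idem1 w := by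
  simp only [idem1, bcMul]
  linear_combination (-(z.2 * w.2)) * Complex.I_sq

lemma idem2_bcMul (z w : BC) : idem2 (bcMul z w) = idem2 z * idem2 w := by
  simp only [idem2, bcMul]
  linear_combination (-(z.2 * w.2)) * Complex.I_sq

lemma idem1_bcStar (z : BC) : idem1 (bcStar z) = star (idem1 z) := by
  simp only [idem1, bcStar, star_sub, star_mul', Complex.star_def, Complex.conj_I]
  ring

lemma idem2_bcStar (z : BC) : idem2 (bcStar z) = star (idem2 z) := by
  simp only [idem2, bcStar, star_add, star_mul', Complex.star_def, Complex.conj_I]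
  ring

lemma idem1_sum {ι : Type*} [Fintype ι] (f : ι → BC) : idem1 (∑ i, f i) = ∑ i, idem1 (f i) := by
  simp [idem1, Prod.fst_sum, Prod.snd_sum, Finset.sum_sub_distrib, Finset.mul_sum]

lemma idem2_sum {ι : Type*} [Fintype ι] (f : ι → BC) : idem2 (∑ i, f i) = ∑ i, idem2 (f i) := by
  simp [idem2, Prod.fst_sum, Prod.snd_sum, Finset.sum_add_distrib, Finset.mul_sum]

lemma BC.ext_idem {z w : BC} (h1 : idem1 z = idem1 w) (h2 : idem2 z = idem2 w) : z = w := by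
  simp only [idem1, idem2] at h1 h2
  refine Prod.ext ?_ ?_
  · linear_combination (h1 + h2) / 2
  · linear_combination (h2 - h1) * (-Complex.I / 2) + (z.2 - w.2) * Complex.I_sq

def bcOfIdem (a b : ℂ) : BC := ((a + b) / 2, Complex.I * (a - b) / 2)

@[simp] lemma idem1_bcOfIdem (a b : ℂ) : idem1 (bcOfIdem a b) = a := by
  simp only [idem1, bcOfIdem]
  linear_combination (-(a - b) / 2) * Complex.I_sq

@[simp] lemma idem2_bcOfIdem (a b : ℂ) : idem2 (bcOfIdem a b) = b := by
  simp only [idem2, bcOfIdem]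
  linear_combination ((a - b) / 2) * Complex.I_sq

lemma inDplus_iff_nonneg (z : BC) : inDplus z ↔ 0 ≤ idem1 z ∧ 0 ≤ idem2 z := by
  simp only [inDplus, Complex.nonneg_iff, eq_comm (a := (0 : ℝ))]
  tauto

lemma midem1_apply {I J : Type} (A : BCMat I J) (i : I) (j : J) :
    midem1 A i j = idem1 (bcEntry A i j) := rfl

lemma midem2_apply {I J : Type} (A : BCMat I J) (i : I) (j : J) :
    midem2 A i j = idem2 (bcEntry A i j) := rfl

lemma bcEntry_bmul {I J K : Type} [Fintype J] (A : BCMat I J) (B : BCMat J K) (i : I) (k : K) :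
    bcEntry (bmul A B) i k = ∑ j, bcMul (bcEntry A i j) (bcEntry B j k) := by
  simp only [bcEntry, bmul, bcMul, Prod.ext_iff, Prod.fst_sum, Prod.snd_sum, Matrix.sub_apply,
    Matrix.add_apply, mul_apply, Finset.sum_sub_distrib, Finset.sum_add_distrib, and_self]

lemma bcEntry_bcStarT {I J : Type} (A : BCMat I J) (i : J) (j : I) :
    bcEntry (bcStarT A) i j = bcStar (bcEntry A j i) := by
  simp [bcEntry, bcStarT, bcStar]

lemma BCMat.ext_midem {I J : Type} {A B : BCMat I J}
    (h1 : midem1 A = midem1 B) (h2 : midem2 A = midem2 B) : A = B := by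
  have h i j : bcEntry A i j = bcEntry B i j :=
    BC.ext_idem (congrFun₂ h1 i j) (congrFun₂ h2 i j)
  exact Prod.ext (Matrix.ext fun i j => congrArg Prod.fst (h i j))
    (Matrix.ext fun i j => congrArg Prod.snd (h i j))

lemma midem1_bmul {I J K : Type} [Fintype J] (A : BCMat I J) (B : BCMat J K) :
    midem1 (bmul A B) = midem1 A * midem1 B := by
  ext i k
  simp only [midem1_apply, bcEntry_bmul, idem1_sum, idem1_bcMul, mul_apply]

lemma midem2_bmul {I J K : Type} [Fintype J] (A : BCMat I J) (B : BCMat J K) :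
    midem2 (bmul A B) = midem2 A * midem2 B := by
  ext i k
  simp only [midem2_apply, bcEntry_bmul, idem2_sum, idem2_bcMul, mul_apply]

lemma midem1_bcStarT {I J : Type} (A : BCMat I J) : midem1 (bcStarT A) = (midem1 A)ᴴ := by
  ext i j
  simp only [midem1_apply, bcEntry_bcStarT, idem1_bcStar, conjTranspose_apply]

lemma midem2_bcStarT {I J : Type} (A : BCMat I J) : midem2 (bcStarT A) = (midem2 A)ᴴ := by
  ext i j
  simp only [midem2_apply, bcEntry_bcStarT, idem2_bcStar, conjTranspose_apply]

def bcMatOfIdem {I J : Type} (T₁ T₂ : Matrix I J ℂ) : BCMat I J :=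
  (of fun i j => (bcOfIdem (T₁ i j) (T₂ i j)).1, of fun i j => (bcOfIdem (T₁ i j) (T₂ i j)).2)

@[simp] lemma midem1_bcMatOfIdem {I J : Type} (T₁ T₂ : Matrix I J ℂ) :
    midem1 (bcMatOfIdem T₁ T₂) = T₁ := by
  ext i j
  exact idem1_bcOfIdem (T₁ i j) (T₂ i j)

@[simp] lemma midem2_bcMatOfIdem {I J : Type} (T₁ T₂ : Matrix I J ℂ) :
    midem2 (bcMatOfIdem T₁ T₂) = T₂ := by
  ext i j
  exact idem2_bcOfIdem (T₁ i j) (T₂ i j)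

lemma idem1_quadForm {I : Type} [Fintype I] (A : BCMat I I) (c : I → BC) :
    idem1 (quadForm A c) = star (fun j => idem1 (c j)) ⬝ᵥ (midem1 A *ᵥ fun j => idem1 (c j)) := by
  simp only [quadForm, idem1_sum, idem1_bcMul, idem1_bcStar, dotProduct, mulVec, Pi.star_apply,
    Finset.mul_sum, midem1_apply]

lemma idem2_quadForm {I : Type} [Fintype I] (A : BCMat I I) (c : I → BC) :
    idem2 (quadForm A c) = star (fun j => idem2 (c j)) ⬝ᵥ (midem2 A *ᵥ fun j => idem2 (c j)) := by
  simp only [quadForm, idem2_sum, idem2_bcMul, idem2_bcStar, dotProduct, mulVec, Pi.star_apply,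
    Finset.mul_sum, midem2_apply]

theorem hypPos_iff_posSemidef {I : Type} [Fintype I] (A : BCMat I I) :
    HypPos A ↔ (midem1 A).PosSemidef ∧ (midem2 A).PosSemidef := by
  simp only [posSemidef_iff_forall_star_dotProduct_mulVec_nonneg, HypPos, inDplus_iff_nonneg,
    idem1_quadForm, idem2_quadForm]
  refine ⟨fun h => ⟨fun x => ?_, fun y => ?_⟩, fun ⟨h1, h2⟩ c => ⟨h1 _, h2 _⟩⟩
  · simpa using (h fun j => bcOfIdem (x j) 0).1
  · simpa using (h fun j => bcOfIdem 0 (y j)).2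

/-- `A` is hyperbolic positive iff `A = (U*)ᵗ · U` for some
bicomplex matrix `U` both of whose idempotent components are upper triangular. -/
theorem hypPos_iff_upper_triangular {n : ℕ} (A : BCMat (Fin n) (Fin n)) :
    HypPos A ↔
      ∃ U : BCMat (Fin n) (Fin n),
        (∀ i j : Fin n, j < i → midem1 U i j = 0) ∧
        (∀ i j : Fin n, j < i → midem2 U i j = 0) ∧
        A = bmul (bcStarT U) U := by
  rw [hypPos_iff_posSemidef]
  constructor
  · rintro ⟨h1, h2⟩
    obtain ⟨T₁, hT₁, hA₁⟩ := h1.exists_isUpperTriangular_eq_conjTranspose_mul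
    obtain ⟨T₂, hT₂, hA₂⟩ := h2.exists_isUpperTriangular_eq_conjTranspose_mul
    refine ⟨bcMatOfIdem T₁ T₂, fun i j hji => by simpa using hT₁ hji,
      fun i j hji => by simpa using hT₂ hji, BCMat.ext_midem ?_ ?_⟩
    · rw [midem1_bmul, midem1_bcStarT, midem1_bcMatOfIdem, hA₁]
    · rw [midem2_bmul, midem2_bcStarT, midem2_bcMatOfIdem, hA₂]
  · rintro ⟨U, -, -, rfl⟩
    rw [midem1_bmul, midem1_bcStarT, midem2_bmul, midem2_bcStarT]
    exact ⟨posSemidef_conjTranspose_mul_self _, posSemidef_conjTranspose_mul_self _⟩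

end
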